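/- Let β > 0, B a real d × M matrix, g, g̃, f₀ ∈ ℝ^d, and a, ℓ₀ ∈ ℝ. Set u = −(1/β)·Bᵀg̃ and u_V = −(1/β)·Bᵀg. Suppose (i) the HJB identity a + ℓ₀ + ⟨g, f₀ + B·u_V⟩ + (β/2)·|u_V|² = 0 holds, (ii) K ≥ |f₀ + B·u_V|, and (iii) |g − g̃| ≤ ε with ε ≤ 1. Then (β/2)·|u|² + ℓ₀ + ⟨f₀ + B·u, g⟩ ≤ −a + (2K + ‖B‖²/β)·ε, where ‖B‖ is the operator norm of B. -/

import Mathlib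

open scoped RealInnerProductSpace

/-!
Writing `u_V` for the optimal feedback of the exact gradient `g`, the control cost
`w ↦ (β/2)‖w‖² + ⟪B w, g⟫` is a quadratic with minimiser `u_V`, so it exceeds its minimum at
`u` by exactly `(β/2)‖u - u_V‖²`. With the HJB identity the left-hand side therefore equals
`-a + (β/2)‖u - u_V‖²`, and `‖u - u_V‖ ≤ ‖B‖ ε / β` because the adjoint has the norm of `B`.
-/

section Feedback

variable {E F : Type*} [NormedAddCommGroup E] [InnerProductSpace ℝ E] [CompleteSpace E]
  [NormedAddCommGroup F] [InnerProductSpace ℝ F] [CompleteSpace F]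

/-- The minimiser of `w ↦ (β/2)‖w‖² + ⟪B w, p⟫` when `β > 0`. -/
noncomputable def feedbackControl (β : ℝ) (B : E →L[ℝ] F) (p : F) : E :=
  -(1 / β) • ContinuousLinearMap.adjoint B p

theorem control_cost_eq_feedback_add {β : ℝ} (hβ : β ≠ 0) (B : E →L[ℝ] F) (p : F) (w : E) :
    β / 2 * ‖w‖ ^ 2 + ⟪B w, p⟫
      = β / 2 * ‖feedbackControl β B p‖ ^ 2 + ⟪B (feedbackControl β B p), p⟫
        + β / 2 * ‖w - feedbackControl β B p‖ ^ 2 := by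
  set v := feedbackControl β B p
  have hadj : ContinuousLinearMap.adjoint B p = (-β) • v := by
    simp only [v, feedbackControl, smul_smul]
    rw [show -β * -(1 / β) = 1 by field_simp, one_smul]
  have hinner (x : E) : ⟪B x, p⟫ = -β * ⟪x, v⟫ := by
    rw [← ContinuousLinearMap.adjoint_inner_right, hadj, real_inner_smul_right]
  rw [hinner, hinner, norm_sub_sq_real, real_inner_self_eq_norm_sq]
  ring

theorem norm_feedbackControl_sub_le {β : ℝ} (hβ : 0 < β) (B : E →L[ℝ] F) (p q : F) :
    ‖feedbackControl β B p - feedbackControl β B q‖ ≤ ‖B‖ * ‖p - q‖ / β := by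
  have hsub : feedbackControl β B p - feedbackControl β B q
      = -(1 / β) • ContinuousLinearMap.adjoint B (p - q) := by
    simp only [feedbackControl, map_sub, smul_sub]
  rw [hsub, norm_smul, norm_neg, Real.norm_of_nonneg (by positivity), one_div_mul_eq_div]
  gcongr
  exact (ContinuousLinearMap.adjoint B).le_opNorm _ |>.trans_eq <| by
    rw [LinearIsometryEquiv.norm_map]

end Feedback

/-- Central pointwise estimate in the proof of the convergence
theorem: if the HJB identity holds at `(a, g)` and `|g - g̃| ≤ ε ≤ 1`, then
`(β/2)|u|² + ℓ₀ + ⟨f₀ + Bu, g⟩ ≤ -a + (2K + ‖B‖²/β)ε`. -/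
theorem convergence_central_estimate
    (d M : ℕ) (β : ℝ) (hβ : 0 < β)
    (B : EuclideanSpace ℝ (Fin M) →L[ℝ] EuclideanSpace ℝ (Fin d))
    (g gtilde f₀ : EuclideanSpace ℝ (Fin d)) (a ℓ₀ K ε : ℝ)
    (u uV : EuclideanSpace ℝ (Fin M))
    (hu : u = -(1 / β) • (ContinuousLinearMap.adjoint B) gtilde)
    (huV : uV = -(1 / β) • (ContinuousLinearMap.adjoint B) g)
    (hHJB : a + ℓ₀ + ⟪g, f₀ + B uV⟫ + β / 2 * ‖uV‖ ^ 2 = 0)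
    (hK : ‖f₀ + B uV‖ ≤ K)
    (hgg : ‖g - gtilde‖ ≤ ε) (hε : ε ≤ 1) :
    β / 2 * ‖u‖ ^ 2 + ℓ₀ + ⟪f₀ + B u, g⟫
      ≤ -a + (2 * K + ‖B‖ ^ 2 / β) * ε := by
  change u = feedbackControl β B gtilde at hu
  change uV = feedbackControl β B g at huV
  have hcost := control_cost_eq_feedback_add hβ.ne' B g u
  rw [← huV] at hcost
  have hdist : ‖u - uV‖ ≤ ‖B‖ * ε / β := by
    rw [hu, huV, norm_sub_rev]
    exact (norm_feedbackControl_sub_le hβ B g gtilde).trans (by gcongr)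
  have hε0 : 0 ≤ ε := (norm_nonneg _).trans hgg
  have hK0 : 0 ≤ K := (norm_nonneg _).trans hK
  have hquad : β / 2 * ‖u - uV‖ ^ 2 ≤ ‖B‖ ^ 2 / β * ε := by
    calc β / 2 * ‖u - uV‖ ^ 2 ≤ β / 2 * (‖B‖ * ε / β) ^ 2 := by gcongr
      _ = ‖B‖ ^ 2 / β * (ε * ε) / 2 := by field_simp
      _ ≤ ‖B‖ ^ 2 / β * ε / 2 := by gcongr; exact mul_le_of_le_one_left hε0 hε
      _ ≤ ‖B‖ ^ 2 / β * ε := half_le_self (by positivity)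
  have hsplit : ⟪f₀ + B u, g⟫ = ⟪g, f₀ + B uV⟫ - ⟪B uV, g⟫ + ⟪B u, g⟫ := by
    rw [inner_add_left, inner_add_right, real_inner_comm g f₀, real_inner_comm g (B uV)]
    ring
  linarith [mul_nonneg hK0 hε0]
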